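/- Let {f̂(n)}_{n∈ℤ} be complex numbers such that f̂(n) + f̂(−n) ∈ K(θ1) for all n ≥ 1, for some θ1 ∈ [0, π/2), and suppose the series f(x) = Σ_{n=−∞}^{∞} f̂(n)e^{inx} converges at every x to a continuous function f ∈ C_{2π}. Then there exists C > 0 such that Σ_{k=2n+1}^{∞} |f̂(k) + f̂(−k)| ≤ C·E_n(f) for all n ≥ 1. -/

import Mathlib

/-!
Write `a k = f̂ k + f̂ (-k)`. The sector condition gives `Re a k ≥ ‖a k‖ cos θ₁ ≥ 0`, so the
convergence of the series at `x = 0` bounds `∑ ‖a k‖`; hence the partial sums of the even part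
`(f x + f (-x)) / 2` are uniformly bounded and, by dominated convergence, can be integrated term
by term against an even kernel.

The kernel is `W = V_M - V_n`, a difference of de la Vallée Poussin kernels
`V_N = (F_{2N+1} - F_N) / (N + 1)`, where `F_N = |∑_{j ≤ N} e^{ijx}|²` is the Fejér kernel.
The Fourier coefficients `λ k` of `W` vanish for `|k| ≤ n`, are nonnegative, and are at least
`1/2` for `2n + 1 ≤ |k| ≤ M + 1`, while `∫ |W| ≤ 12π`. Pairing `W` with `f - T`, for `T` of degree
`n` with `‖f - T‖ ≤ E_n(f) + ε`, gives `2π ∑ λ k Re a k ≤ 12π (E_n(f) + ε)`, hence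
`∑_{k=2n+1}^{m} ‖a k‖ ≤ 12 E_n(f) / cos θ₁`.
-/

open Filter Complex Real

noncomputable section

def Kset (θ : ℝ) : Set ℂ := {z : ℂ | |Complex.arg z| ≤ θ}

/-- `En n f` : the best uniform approximation of `f` by trigonometric polynomials
`T(x) = Σ_{k=-n}^{n} c_k e^{ikx}` of degree at most `n`. -/
def En (n : ℕ) (f : ℝ → ℂ) : ℝ :=
  sInf { y : ℝ | ∃ c : ℤ → ℂ,
    y = ⨆ x : ℝ, ‖f x -
      ∑ k ∈ Finset.Icc (-(n : ℤ)) (n : ℤ), c k * Complex.exp ((k : ℂ) * (x : ℂ) * Complex.I)‖ }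

open MeasureTheory Finset Topology

namespace SectorFourier

def expI (k : ℤ) (x : ℝ) : ℂ := Complex.exp (k * x * I)

@[fun_prop]
lemma continuous_expI (k : ℤ) : Continuous (expI k) := by
  unfold expI; fun_prop

lemma expI_mul_expI (j l : ℤ) (x : ℝ) : expI j x * expI l x = expI (j + l) x := by
  simp only [expI, ← Complex.exp_add]; push_cast; ring_nf

lemma norm_expI (k : ℤ) (x : ℝ) : ‖expI k x‖ = 1 := by
  rw [expI, show (k : ℂ) * x * I = ((k * x : ℝ) : ℂ) * I by push_cast; ring]
  exact Complex.norm_exp_ofReal_mul_I _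

lemma expI_neg (k : ℤ) (x : ℝ) : expI k (-x) = expI (-k) x := by
  simp only [expI]; push_cast; ring_nf

lemma conj_expI (k : ℤ) (x : ℝ) : (starRingEnd ℂ) (expI k x) = expI (-k) x := by
  rw [expI, ← Complex.exp_conj]; simp [expI]

lemma expI_add_two_pi (k : ℤ) (x : ℝ) : expI k (x + 2 * π) = expI k x := by
  rw [expI, expI, ← mul_one (Complex.exp (k * x * I)), ← Complex.exp_int_mul_two_pi_mul_I k,
    ← Complex.exp_add]
  push_cast; ring_nf

lemma integral_expI (k : ℤ) :
    ∫ x in -π..π, expI k x = if k = 0 then 2 * (π : ℂ) else 0 := by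
  split_ifs with hk
  · simp [hk, expI]; ring
  have hc : (k : ℂ) * I ≠ 0 := by simp [hk]
  have h_ends : Complex.exp (k * I * π) = Complex.exp (k * I * (-π : ℝ)) := by
    simpa only [expI, mul_right_comm _ _ I, show -π + 2 * π = π by ring]
      using expI_add_two_pi k (-π)
  simp only [expI, mul_right_comm _ _ I]
  rw [integral_exp_mul_complex hc, h_ends, sub_self, zero_div]

lemma sum_Icc_comp_neg {M : Type*} [AddCommMonoid M] (F : ℤ → M) (N : ℕ) :
    ∑ k ∈ Icc (-(N : ℤ)) N, F (-k) = ∑ k ∈ Icc (-(N : ℤ)) N, F k :=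
  sum_nbij' Neg.neg Neg.neg (by intro k; simp; omega) (by intro k; simp; omega)
    (by simp) (by simp) (by simp)

lemma sum_Icc_neg_eq_add_sum {M : Type*} [AddCommMonoid M] (F : ℤ → M) (N : ℕ) :
    ∑ k ∈ Icc (-(N : ℤ)) N, F k = F 0 + ∑ k ∈ Icc 1 N, (F k + F (-k)) := by
  induction N with
  | zero => simp
  | succ N ih =>
    have h_Icc : Icc (-((N + 1 : ℕ) : ℤ)) (N + 1 : ℕ)
        = insert (-((N + 1 : ℕ) : ℤ)) (insert ((N + 1 : ℕ) : ℤ) (Icc (-(N : ℤ)) N)) := by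
      ext k; simp only [mem_Icc, mem_insert]; omega
    rw [h_Icc, sum_insert (by simp; omega), sum_insert (by simp), ih,
      ← insert_Icc_right_eq_Icc_add_one (by omega), sum_insert (by simp)]
    abel

def trigPoly (c : ℤ → ℂ) (N : ℕ) (x : ℝ) : ℂ := ∑ k ∈ Icc (-(N : ℤ)) N, c k * expI k x

@[fun_prop]
lemma continuous_trigPoly (c : ℤ → ℂ) (N : ℕ) : Continuous (trigPoly c N) :=
  continuous_finsetSum _ fun k _ => continuous_const.mul (continuous_expI k)

lemma trigPoly_add_two_pi (c : ℤ → ℂ) (N : ℕ) (x : ℝ) :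
    trigPoly c N (x + 2 * π) = trigPoly c N x := by
  simp only [trigPoly, expI_add_two_pi]

lemma norm_trigPoly_le (c : ℤ → ℂ) (N : ℕ) (x : ℝ) :
    ‖trigPoly c N x‖ ≤ ∑ k ∈ Icc (-(N : ℤ)) N, ‖c k‖ :=
  (norm_sum_le _ _).trans_eq (by simp only [norm_mul, norm_expI, mul_one])

lemma trigPoly_zero (c : ℤ → ℂ) (N : ℕ) : trigPoly c N 0 = ∑ k ∈ Icc (-(N : ℤ)) N, c k := by
  simp [trigPoly, expI]

lemma trigPoly_evenPart (c : ℤ → ℂ) (N : ℕ) (x : ℝ) :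
    trigPoly (fun k => (c k + c (-k)) / 2) N x = (trigPoly c N x + trigPoly c N (-x)) / 2 := by
  have h_neg : trigPoly c N (-x) = ∑ k ∈ Icc (-(N : ℤ)) N, c (-k) * expI k x := by
    rw [trigPoly, ← sum_Icc_comp_neg]
    simp only [expI_neg, neg_neg]
  rw [h_neg, trigPoly, trigPoly, ← sum_add_distrib, sum_div]
  exact sum_congr rfl fun k _ => by ring

lemma integral_trigPoly_mul (c : ℤ → ℂ) (N : ℕ) {W : ℝ → ℂ} (hW : Continuous W) {w : ℤ → ℂ}
    (hw : ∀ k, ∫ x in -π..π, expI k x * W x = 2 * π * w k) :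
    ∫ x in -π..π, trigPoly c N x * W x = 2 * π * ∑ k ∈ Icc (-(N : ℤ)) N, c k * w k := by
  simp only [trigPoly, sum_mul, mul_sum]
  rw [intervalIntegral.integral_finsetSum fun k _ =>
    Continuous.intervalIntegrable (by fun_prop) _ _]
  refine sum_congr rfl fun k _ => ?_
  simp only [mul_assoc, intervalIntegral.integral_const_mul, hw]
  ring

lemma card_filter_sub_eq (N : ℕ) (k : ℤ) :
    #{p ∈ range (N + 1) ×ˢ range (N + 1) | (p.1 : ℤ) - p.2 = k} = (N + 1 - |k|).toNat := by
  have h_bij : #{p ∈ range (N + 1) ×ˢ range (N + 1) | (p.1 : ℤ) - p.2 = k}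
      = #(Icc (max 0 k) (min (N : ℤ) (N + k))) := by
    refine card_nbij' (fun p => (p.1 : ℤ)) (fun j => (j.toNat, (j - k).toNat)) ?_ ?_ ?_ ?_
    · intro p hp
      simp only [coe_filter, mem_product, mem_range, Set.mem_ofPred_eq] at hp
      simp only [coe_Icc, Set.mem_Icc, max_le_iff, le_min_iff]
      omega
    · intro j hj
      simp only [coe_Icc, Set.mem_Icc, max_le_iff, le_min_iff] at hj
      simp only [coe_filter, mem_product, mem_range, Set.mem_ofPred_eq]
      omega
    · intro p hp
      simp only [coe_filter, mem_product, mem_range, Set.mem_ofPred_eq] at hp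
      ext <;> simp; omega
    · intro j hj
      simp only [coe_Icc, Set.mem_Icc, max_le_iff, le_min_iff] at hj
      simp; omega
  rw [h_bij, Int.card_Icc]
  congr 1
  rcases abs_cases k with ⟨hk, _⟩ | ⟨hk, _⟩ <;> omega

def fejer (N : ℕ) (x : ℝ) : ℝ := normSq (∑ j ∈ range (N + 1), expI j x)

def fejerCoeff (N : ℕ) (k : ℤ) : ℝ := max 0 (N + 1 - |(k : ℝ)|)

lemma fejer_nonneg (N : ℕ) (x : ℝ) : 0 ≤ fejer N x := normSq_nonneg _

@[fun_prop]
lemma continuous_fejer (N : ℕ) : Continuous (fejer N) :=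
  continuous_normSq.comp (continuous_finsetSum _ fun j _ => continuous_expI j)

lemma fejer_neg (N : ℕ) (x : ℝ) : fejer N (-x) = fejer N x := by
  simp only [fejer, expI_neg, ← conj_expI, ← map_sum, normSq_conj]

lemma ofReal_fejer (N : ℕ) (x : ℝ) :
    (fejer N x : ℂ) = ∑ j ∈ range (N + 1), ∑ l ∈ range (N + 1), expI ((j : ℤ) - l) x := by
  rw [fejer, normSq_eq_conj_mul_self, map_sum, sum_mul_sum, sum_comm]
  refine sum_congr rfl fun j _ => sum_congr rfl fun l _ => ?_
  rw [conj_expI, expI_mul_expI, neg_add_eq_sub]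

lemma integral_expI_mul_fejer (N : ℕ) (k : ℤ) :
    ∫ x in -π..π, expI k x * fejer N x = 2 * π * fejerCoeff N k := by
  have h_expand : ∀ x, expI k x * fejer N x
      = ∑ p ∈ range (N + 1) ×ˢ range (N + 1), expI (k + ((p.1 : ℤ) - p.2)) x := by
    intro x
    simp only [ofReal_fejer, mul_sum, sum_product, expI_mul_expI]
  simp_rw [h_expand]
  rw [intervalIntegral.integral_finsetSum fun p _ => (continuous_expI _).intervalIntegrable _ _]
  simp only [integral_expI, add_eq_zero_iff_eq_neg']
  rw [← sum_filter, sum_const, card_filter_sub_eq, abs_neg, nsmul_eq_mul]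
  have h_cast : (((N + 1 - |k|).toNat : ℕ) : ℝ) = fejerCoeff N k := by
    rw [fejerCoeff, ← Int.cast_abs, ← Int.cast_natCast, Int.toNat_eq_max]
    push_cast
    exact max_comm _ _
  rw [← h_cast]; push_cast; ring

lemma integral_fejer (N : ℕ) : ∫ x in -π..π, fejer N x = 2 * π * ((N : ℝ) + 1) := by
  have h := integral_expI_mul_fejer N 0
  simp only [expI, Int.cast_zero, zero_mul, Complex.exp_zero, one_mul,
    intervalIntegral.integral_ofReal] at h
  have h_coeff : fejerCoeff N 0 = N + 1 := by simp [fejerCoeff]; positivity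
  rw [h_coeff] at h
  exact_mod_cast h

def valleePoussin (N : ℕ) (x : ℝ) : ℝ := (fejer (2 * N + 1) x - fejer N x) / (N + 1)

def valleePoussinCoeff (N : ℕ) (k : ℤ) : ℝ := min 1 (max 0 (2 - |(k : ℝ)| / (N + 1)))

lemma max_zero_sub_max_zero_sub {a s : ℝ} (hs : 0 ≤ s) :
    max 0 a - max 0 (a - s) = min s (max 0 a) := by
  rcases max_cases 0 a with h | h <;> rcases max_cases 0 (a - s) with h' | h' <;>
    rcases min_cases s (max 0 a) with h'' | h'' <;> linarith

lemma fejerCoeff_sub_div (N : ℕ) (k : ℤ) :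
    (fejerCoeff (2 * N + 1) k - fejerCoeff N k) / (N + 1) = valleePoussinCoeff N k := by
  have hs : (0 : ℝ) < N + 1 := by positivity
  have h_two : 2 - |(k : ℝ)| / (N + 1) = (((2 * N + 1 : ℕ) : ℝ) + 1 - |(k : ℝ)|) / (N + 1) := by
    field_simp; push_cast; ring
  have h_shift : (N : ℝ) + 1 - |(k : ℝ)| = (((2 * N + 1 : ℕ) : ℝ) + 1 - |(k : ℝ)|) - (N + 1) := by
    push_cast; ring
  rw [valleePoussinCoeff, h_two, fejerCoeff, fejerCoeff, h_shift,
    max_zero_sub_max_zero_sub hs.le, ← min_div_div_right hs.le, div_self hs.ne',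
    ← max_div_div_right hs.le, zero_div]

lemma valleePoussinCoeff_neg (N : ℕ) (k : ℤ) :
    valleePoussinCoeff N (-k) = valleePoussinCoeff N k := by
  simp [valleePoussinCoeff]

lemma valleePoussinCoeff_eq_one {N : ℕ} {k : ℤ} (h : |k| ≤ N + 1) : valleePoussinCoeff N k = 1 := by
  have h_le : |(k : ℝ)| / (N + 1) ≤ 1 := div_le_one_of_le₀ (by exact_mod_cast h) (by positivity)
  exact min_eq_left (le_max_of_le_right (by linarith))

lemma valleePoussinCoeff_le {N : ℕ} {k : ℤ} (h : 2 * N + 1 ≤ |k|) :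
    valleePoussinCoeff N k ≤ 1 / (N + 1) := by
  have hs : (0 : ℝ) < N + 1 := by positivity
  have h_le : 2 - |(k : ℝ)| / (N + 1) ≤ 1 / (N + 1) := by
    rw [sub_le_iff_le_add, ← add_div, le_div_iff₀ hs]
    have : (2 * N + 1 : ℝ) ≤ |(k : ℝ)| := by exact_mod_cast h
    linarith
  exact min_le_right _ _ |>.trans (max_le (by positivity) h_le)

lemma valleePoussinCoeff_mono {N M : ℕ} (h : N ≤ M) (k : ℤ) :
    valleePoussinCoeff N k ≤ valleePoussinCoeff M k := by
  unfold valleePoussinCoeff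
  gcongr

@[fun_prop]
lemma continuous_valleePoussin (N : ℕ) : Continuous (valleePoussin N) := by
  unfold valleePoussin; fun_prop

lemma valleePoussin_neg (N : ℕ) (x : ℝ) : valleePoussin N (-x) = valleePoussin N x := by
  simp only [valleePoussin, fejer_neg]

lemma integral_expI_mul_valleePoussin (N : ℕ) (k : ℤ) :
    ∫ x in -π..π, expI k x * valleePoussin N x = 2 * π * valleePoussinCoeff N k := by
  have h_split : ∀ x, expI k x * valleePoussin N x
      = (expI k x * fejer (2 * N + 1) x - expI k x * fejer N x) / (N + 1) := by
    intro x; simp only [valleePoussin]; push_cast; ring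
  simp_rw [h_split]
  rw [intervalIntegral.integral_div, intervalIntegral.integral_sub
    (Continuous.intervalIntegrable (by fun_prop) _ _)
    (Continuous.intervalIntegrable (by fun_prop) _ _),
    integral_expI_mul_fejer, integral_expI_mul_fejer, ← fejerCoeff_sub_div]
  push_cast; ring

lemma integral_abs_valleePoussin_le (N : ℕ) : ∫ x in -π..π, |valleePoussin N x| ≤ 6 * π := by
  have hs : (0 : ℝ) < N + 1 := by positivity
  have h_pt : ∀ x, |valleePoussin N x| ≤ (fejer (2 * N + 1) x + fejer N x) / (N + 1) := by
    intro x
    rw [valleePoussin, abs_div, abs_of_pos hs]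
    gcongr
    exact (abs_sub _ _).trans_eq
      (by rw [abs_of_nonneg (fejer_nonneg _ _), abs_of_nonneg (fejer_nonneg _ _)])
  calc ∫ x in -π..π, |valleePoussin N x|
      ≤ ∫ x in -π..π, (fejer (2 * N + 1) x + fejer N x) / (N + 1) :=
        intervalIntegral.integral_mono_on (by linarith [pi_pos])
          (Continuous.intervalIntegrable (by fun_prop) _ _)
          (Continuous.intervalIntegrable (by fun_prop) _ _) fun x _ => h_pt x
    _ = 6 * π := by
        rw [intervalIntegral.integral_div, intervalIntegral.integral_add
          (Continuous.intervalIntegrable (by fun_prop) _ _)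
          (Continuous.intervalIntegrable (by fun_prop) _ _), integral_fejer, integral_fejer]
        field_simp; push_cast; ring

def valleePoussinDiff (M N : ℕ) (x : ℝ) : ℝ := valleePoussin M x - valleePoussin N x

def valleePoussinDiffCoeff (M N : ℕ) (k : ℤ) : ℝ := valleePoussinCoeff M k - valleePoussinCoeff N k

@[fun_prop]
lemma continuous_valleePoussinDiff (M N : ℕ) : Continuous (valleePoussinDiff M N) := by
  unfold valleePoussinDiff; fun_prop

lemma valleePoussinDiff_neg (M N : ℕ) (x : ℝ) :
    valleePoussinDiff M N (-x) = valleePoussinDiff M N x := by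
  simp only [valleePoussinDiff, valleePoussin_neg]

lemma integral_expI_mul_valleePoussinDiff (M N : ℕ) (k : ℤ) :
    ∫ x in -π..π, expI k x * valleePoussinDiff M N x = 2 * π * valleePoussinDiffCoeff M N k := by
  simp only [valleePoussinDiff, valleePoussinDiffCoeff, Complex.ofReal_sub, mul_sub]
  rw [intervalIntegral.integral_sub (Continuous.intervalIntegrable (by fun_prop) _ _)
    (Continuous.intervalIntegrable (by fun_prop) _ _), integral_expI_mul_valleePoussin,
    integral_expI_mul_valleePoussin]

lemma integral_abs_valleePoussinDiff_le (M N : ℕ) :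
    ∫ x in -π..π, |valleePoussinDiff M N x| ≤ 12 * π :=
  calc ∫ x in -π..π, |valleePoussinDiff M N x|
      ≤ ∫ x in -π..π, (|valleePoussin M x| + |valleePoussin N x|) :=
        intervalIntegral.integral_mono_on (by linarith [pi_pos])
          (Continuous.intervalIntegrable (by fun_prop) _ _)
          (Continuous.intervalIntegrable (by fun_prop) _ _) fun x _ => abs_sub _ _
    _ ≤ 12 * π := by
        rw [intervalIntegral.integral_add (Continuous.intervalIntegrable (by fun_prop) _ _)
          (Continuous.intervalIntegrable (by fun_prop) _ _)]
        linarith [integral_abs_valleePoussin_le M, integral_abs_valleePoussin_le N]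

lemma valleePoussinDiffCoeff_nonneg {M N : ℕ} (h : N ≤ M) (k : ℤ) :
    0 ≤ valleePoussinDiffCoeff M N k :=
  sub_nonneg.mpr (valleePoussinCoeff_mono h k)

lemma valleePoussinDiffCoeff_neg (M N : ℕ) (k : ℤ) :
    valleePoussinDiffCoeff M N (-k) = valleePoussinDiffCoeff M N k := by
  simp only [valleePoussinDiffCoeff, valleePoussinCoeff_neg]

lemma valleePoussinDiffCoeff_eq_zero {M N : ℕ} (h : N ≤ M) {k : ℤ} (hk : |k| ≤ N + 1) :
    valleePoussinDiffCoeff M N k = 0 := by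
  rw [valleePoussinDiffCoeff, valleePoussinCoeff_eq_one hk,
    valleePoussinCoeff_eq_one (hk.trans (by omega)), sub_self]

lemma half_le_valleePoussinDiffCoeff {M N : ℕ} (hN : 1 ≤ N) {k : ℤ} (hk : 2 * N + 1 ≤ |k|)
    (hkM : |k| ≤ M + 1) : 1 / 2 ≤ valleePoussinDiffCoeff M N k := by
  have h_half : 1 / ((N : ℝ) + 1) ≤ 1 / 2 := by
    gcongr; exact_mod_cast Nat.succ_le_succ hN
  rw [valleePoussinDiffCoeff, valleePoussinCoeff_eq_one hkM]
  linarith [valleePoussinCoeff_le hk]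

lemma exists_norm_le_of_tendsto_trigPoly {fhat : ℤ → ℂ} {f : ℝ → ℂ}
    (hconv : ∀ x, Tendsto (fun N => trigPoly fhat N x) atTop (𝓝 (f x))) (hf : Continuous f) :
    ∃ B, ∀ x, ‖f x‖ ≤ B := by
  have h_per : Function.Periodic f (2 * π) := fun x =>
    tendsto_nhds_unique (by simpa only [trigPoly_add_two_pi] using hconv (x + 2 * π)) (hconv x)
  obtain ⟨B, hB⟩ :=
    isBounded_iff_forall_norm_le.mp (h_per.isBounded_of_continuous (by positivity) hf)
  exact ⟨B, fun x => hB _ ⟨x, rfl⟩⟩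

lemma exists_trigPoly_norm_sub_le_En {f : ℝ → ℂ} {B : ℝ} (hB : ∀ x, ‖f x‖ ≤ B) (n : ℕ)
    {ε : ℝ} (hε : 0 < ε) : ∃ c : ℤ → ℂ, ∀ x, ‖f x - trigPoly c n x‖ ≤ En n f + ε := by
  have h_ne : {y : ℝ | ∃ c : ℤ → ℂ, y = ⨆ x, ‖f x - trigPoly c n x‖}.Nonempty := ⟨_, 0, rfl⟩
  obtain ⟨_, ⟨c, rfl⟩, h_lt⟩ := Real.lt_sInf_add_pos h_ne hε
  -- `⨆` of an unbounded family is `0`, so the supremum bounds `‖f x - T x‖` only because it is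
  -- bounded above.
  refine ⟨c, fun x => (le_ciSup ⟨B + ∑ k ∈ Icc (-(n : ℤ)) n, ‖c k‖, ?_⟩ x).trans h_lt.le⟩
  rintro _ ⟨y, rfl⟩
  exact (norm_sub_le _ _).trans (add_le_add (hB y) (norm_trigPoly_le c n y))

lemma sum_Icc_re_le_of_tendsto {a : ℕ → ℂ} {L : ℂ} (h_nonneg : ∀ k, 1 ≤ k → 0 ≤ (a k).re)
    (h : Tendsto (fun N => ∑ k ∈ Icc 1 N, a k) atTop (𝓝 L)) (N : ℕ) :
    ∑ k ∈ Icc 1 N, (a k).re ≤ L.re := by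
  have h_mono : Monotone fun N => ∑ k ∈ Icc 1 N, (a k).re := fun N M hNM =>
    sum_le_sum_of_subset_of_nonneg (Icc_subset_Icc_right hNM) fun k hk _ =>
      h_nonneg k (mem_Icc.mp hk).1
  exact h_mono.ge_of_tendsto
    (by simpa only [Function.comp_def, re_sum] using (continuous_re.tendsto L).comp h) N

lemma norm_mul_cos_le_re {z : ℂ} {θ : ℝ} (hz : |arg z| ≤ θ) (hθ : θ ≤ π) :
    ‖z‖ * Real.cos θ ≤ z.re :=
  calc ‖z‖ * Real.cos θ ≤ ‖z‖ * Real.cos (arg z) := by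
        gcongr
        rw [← Real.cos_abs (arg z)]
        exact Real.cos_le_cos_of_nonneg_of_le_pi (abs_nonneg _) hθ hz
    _ = z.re := norm_mul_cos_arg z

lemma sum_norm_le_sum_re_div {ι : Type*} (s : Finset ι) {a : ι → ℂ} {θ : ℝ}
    (hθ : 0 < Real.cos θ) (ha : ∀ k ∈ s, ‖a k‖ * Real.cos θ ≤ (a k).re) :
    ∑ k ∈ s, ‖a k‖ ≤ (∑ k ∈ s, (a k).re) / Real.cos θ := by
  rw [le_div_iff₀ hθ, sum_mul]
  exact sum_le_sum ha

lemma tendsto_integral_trigPoly_evenPart_mul {fhat : ℤ → ℂ} {f : ℝ → ℂ}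
    (hconv : ∀ x, Tendsto (fun N => trigPoly fhat N x) atTop (𝓝 (f x))) (hf : Continuous f)
    {B : ℝ} (hB : ∀ N : ℕ, ∑ k ∈ Icc 1 N, ‖fhat k + fhat (-k)‖ ≤ B)
    {W : ℝ → ℂ} (hW : Continuous W) (hW_neg : ∀ x, W (-x) = W x) :
    Tendsto (fun N => ∫ x in -π..π, trigPoly (fun k => (fhat k + fhat (-k)) / 2) N x * W x)
      atTop (𝓝 (∫ x in -π..π, f x * W x)) := by
  have h_neg : ∫ x in -π..π, f (-x) * W x = ∫ x in -π..π, f x * W x := by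
    simpa only [hW_neg, neg_neg] using
      intervalIntegral.integral_comp_neg (a := -π) (b := π) fun x => f x * W x
  have h_even : ∫ x in -π..π, (f x + f (-x)) / 2 * W x = ∫ x in -π..π, f x * W x := by
    simp only [add_div, add_mul]
    rw [intervalIntegral.integral_add (Continuous.intervalIntegrable (by fun_prop) _ _)
      (Continuous.intervalIntegrable (by fun_prop) _ _)]
    simp only [div_mul_eq_mul_div, intervalIntegral.integral_div, h_neg, add_halves]
  have h_coeff_sum : ∀ N : ℕ, ∑ k ∈ Icc (-(N : ℤ)) N, ‖(fhat k + fhat (-k)) / 2‖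
      = ‖fhat 0‖ + ∑ k ∈ Icc 1 N, ‖fhat k + fhat (-k)‖ := by
    intro N
    rw [sum_Icc_neg_eq_add_sum, neg_zero, add_self_div_two]
    congr 1
    refine sum_congr rfl fun k _ => ?_
    rw [neg_neg, add_comm (fhat (-k)), ← two_mul, norm_div, Complex.norm_two]
    ring
  rw [← h_even]
  refine intervalIntegral.tendsto_integral_filter_of_dominated_convergence
    (fun x => (‖fhat 0‖ + B) * ‖W x‖)
    (Eventually.of_forall fun N => (Continuous.aestronglyMeasurable (by fun_prop)))
    (Eventually.of_forall fun N => ae_of_all _ fun x _ => ?_)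
    (Continuous.intervalIntegrable (by fun_prop) _ _) (ae_of_all _ fun x _ => ?_)
  · rw [norm_mul]
    gcongr
    exact (norm_trigPoly_le _ N x).trans ((h_coeff_sum N).trans_le (by gcongr; exact hB N))
  · simp only [trigPoly_evenPart]
    exact (((hconv x).add (hconv (-x))).div_const 2).mul_const (W x)

lemma norm_integral_mul_ofReal_le {a b δ : ℝ} (hab : a ≤ b) {g : ℝ → ℂ} (hg : ∀ x, ‖g x‖ ≤ δ)
    {K : ℝ → ℝ} (hK : Continuous K) :
    ‖∫ x in a..b, g x * K x‖ ≤ δ * ∫ x in a..b, |K x| := by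
  rw [← intervalIntegral.integral_const_mul]
  refine intervalIntegral.norm_integral_le_of_norm_le hab (ae_of_all _ fun x _ => ?_)
    (Continuous.intervalIntegrable (by fun_prop) _ _)
  rw [norm_mul, Complex.norm_real, Real.norm_eq_abs]
  exact mul_le_mul_of_nonneg_right (hg x) (abs_nonneg _)

lemma norm_integral_mul_valleePoussinDiff_le {f : ℝ → ℂ} (hf : Continuous f) {M n : ℕ}
    (hnM : n ≤ M) {c : ℤ → ℂ} {δ : ℝ} (hc : ∀ x, ‖f x - trigPoly c n x‖ ≤ δ) :
    ‖∫ x in -π..π, f x * valleePoussinDiff M n x‖ ≤ 12 * π * δ := by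
  have h_annihilate : ∫ x in -π..π, trigPoly c n x * valleePoussinDiff M n x = 0 := by
    rw [integral_trigPoly_mul c n (by fun_prop) (integral_expI_mul_valleePoussinDiff M n),
      sum_eq_zero fun k hk => ?_, mul_zero]
    have hk : |k| ≤ n := abs_le.mpr (mem_Icc.mp hk)
    rw [valleePoussinDiffCoeff_eq_zero hnM (by omega), Complex.ofReal_zero, mul_zero]
  have h_sub : ∫ x in -π..π, f x * valleePoussinDiff M n x
      = ∫ x in -π..π, (f x - trigPoly c n x) * valleePoussinDiff M n x := by
    simp only [sub_mul]
    rw [intervalIntegral.integral_sub (Continuous.intervalIntegrable (by fun_prop) _ _)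
      (Continuous.intervalIntegrable (by fun_prop) _ _), h_annihilate, sub_zero]
  have hδ : 0 ≤ δ := (norm_nonneg _).trans (hc 0)
  rw [h_sub]
  refine (norm_integral_mul_ofReal_le (by linarith [pi_pos]) hc (by fun_prop)).trans ?_
  nlinarith [integral_abs_valleePoussinDiff_le M n]

lemma tendsto_sum_mul_valleePoussinDiffCoeff {fhat : ℤ → ℂ} {f : ℝ → ℂ}
    (hconv : ∀ x, Tendsto (fun N => trigPoly fhat N x) atTop (𝓝 (f x))) (hf : Continuous f)
    {B : ℝ} (hB : ∀ N : ℕ, ∑ k ∈ Icc 1 N, ‖fhat k + fhat (-k)‖ ≤ B) {M n : ℕ} (hnM : n ≤ M) :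
    Tendsto (fun N : ℕ => ∑ k ∈ Icc 1 N,
        ((2 * π * valleePoussinDiffCoeff M n k : ℝ) : ℂ) * (fhat k + fhat (-k)))
      atTop (𝓝 (∫ x in -π..π, f x * valleePoussinDiff M n x)) := by
  refine (tendsto_integral_trigPoly_evenPart_mul hconv hf hB (by fun_prop)
    fun x => by rw [valleePoussinDiff_neg]).congr fun N => ?_
  rw [integral_trigPoly_mul _ N (by fun_prop) (integral_expI_mul_valleePoussinDiff M n),
    sum_Icc_neg_eq_add_sum, valleePoussinDiffCoeff_eq_zero hnM (by simp; omega), mul_add, mul_sum]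
  simp only [Complex.ofReal_zero, mul_zero, zero_add, valleePoussinDiffCoeff_neg, neg_neg]
  refine sum_congr rfl fun k _ => ?_
  push_cast; ring

lemma sum_re_le_of_norm_sub_trigPoly_le {fhat : ℤ → ℂ} {f : ℝ → ℂ}
    (hconv : ∀ x, Tendsto (fun N => trigPoly fhat N x) atTop (𝓝 (f x))) (hf : Continuous f)
    (hre : ∀ k : ℕ, 1 ≤ k → 0 ≤ (fhat k + fhat (-k)).re)
    {B : ℝ} (hB : ∀ N : ℕ, ∑ k ∈ Icc 1 N, ‖fhat k + fhat (-k)‖ ≤ B)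
    {n : ℕ} (hn : 1 ≤ n) {c : ℤ → ℂ} {δ : ℝ} (hc : ∀ x, ‖f x - trigPoly c n x‖ ≤ δ) (m : ℕ) :
    ∑ k ∈ Icc (2 * n + 1) m, (fhat k + fhat (-k)).re ≤ 12 * δ := by
  set lam : ℤ → ℝ := valleePoussinDiffCoeff (n + m) n
  have h_lam_nonneg : ∀ k, 0 ≤ lam k := valleePoussinDiffCoeff_nonneg (by omega)
  have h_terms_nonneg : ∀ k : ℕ, 1 ≤ k →
      0 ≤ (((2 * π * lam k : ℝ) : ℂ) * (fhat k + fhat (-k))).re := fun k hk => by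
    rw [re_ofReal_mul]
    have := h_lam_nonneg k
    exact mul_nonneg (by positivity) (hre k hk)
  have h_key : ∑ k ∈ Icc 1 m, lam k * (fhat k + fhat (-k)).re ≤ 6 * δ := by
    have h_partial := sum_Icc_re_le_of_tendsto h_terms_nonneg
      (tendsto_sum_mul_valleePoussinDiffCoeff hconv hf hB (by omega)) m
    have h_bound := norm_integral_mul_valleePoussinDiff_le (M := n + m) hf (by omega) hc
    simp only [re_ofReal_mul, mul_assoc, ← mul_sum] at h_partial
    nlinarith [re_le_norm (∫ x in -π..π, f x * valleePoussinDiff (n + m) n x), pi_pos]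
  calc ∑ k ∈ Icc (2 * n + 1) m, (fhat k + fhat (-k)).re
      ≤ ∑ k ∈ Icc (2 * n + 1) m, 2 * (lam k * (fhat k + fhat (-k)).re) :=
        sum_le_sum fun k hk => by
          have hk := mem_Icc.mp hk
          have h_half : 1 / 2 ≤ lam k :=
            half_le_valleePoussinDiffCoeff hn (by simp; omega) (by simp; omega)
          nlinarith [hre k (by omega)]
    _ ≤ ∑ k ∈ Icc 1 m, 2 * (lam k * (fhat k + fhat (-k)).re) :=
        sum_le_sum_of_subset_of_nonneg (Icc_subset_Icc_left (by omega)) fun k hk _ => by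
          have := hre k (mem_Icc.mp hk).1
          have := h_lam_nonneg k
          positivity
    _ ≤ 12 * δ := by rw [← mul_sum]; linarith

lemma sum_re_le_En {fhat : ℤ → ℂ} {f : ℝ → ℂ}
    (hconv : ∀ x, Tendsto (fun N => trigPoly fhat N x) atTop (𝓝 (f x))) (hf : Continuous f)
    (hre : ∀ k : ℕ, 1 ≤ k → 0 ≤ (fhat k + fhat (-k)).re)
    {B : ℝ} (hB : ∀ N : ℕ, ∑ k ∈ Icc 1 N, ‖fhat k + fhat (-k)‖ ≤ B) {n : ℕ} (hn : 1 ≤ n) (m : ℕ) :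
    ∑ k ∈ Icc (2 * n + 1) m, (fhat k + fhat (-k)).re ≤ 12 * En n f := by
  obtain ⟨Bf, hBf⟩ := exists_norm_le_of_tendsto_trigPoly hconv hf
  refine le_of_forall_pos_le_add fun ε hε => ?_
  obtain ⟨c, hc⟩ := exists_trigPoly_norm_sub_le_En hBf n (by positivity : 0 < ε / 12)
  linarith [sum_re_le_of_norm_sub_trigPoly_le hconv hf hre hB hn hc m]

end SectorFourier

open SectorFourier in
theorem stmt_7 (fhat : ℤ → ℂ) (f : ℝ → ℂ) (θ₁ : ℝ) (hθ₁ : 0 ≤ θ₁) (hθ₁' : θ₁ < Real.pi / 2)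
    (hK : ∀ n : ℕ, 1 ≤ n → (fhat (n : ℤ) + fhat (-(n : ℤ))) ∈ Kset θ₁)
    (hconv : ∀ x : ℝ, Filter.Tendsto
      (fun N : ℕ => ∑ k ∈ Finset.Icc (-(N : ℤ)) (N : ℤ),
        fhat k * Complex.exp ((k : ℂ) * (x : ℂ) * Complex.I))
      Filter.atTop (nhds (f x)))
    (hcont : Continuous f) :
    ∃ C : ℝ, 0 < C ∧ ∀ n : ℕ, 1 ≤ n → ∀ m : ℕ,
      (∑ k ∈ Finset.Icc (2 * n + 1) m, ‖fhat (k : ℤ) + fhat (-(k : ℤ))‖) ≤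
        C * En n f := by
  have h_series : ∀ x, Tendsto (fun N => trigPoly fhat N x) atTop (𝓝 (f x)) := hconv
  have hcos : 0 < Real.cos θ₁ := Real.cos_pos_of_mem_Ioo ⟨by linarith [pi_pos], hθ₁'⟩
  have h_sector : ∀ k : ℕ, 1 ≤ k →
      ‖fhat k + fhat (-k)‖ * Real.cos θ₁ ≤ (fhat k + fhat (-k)).re :=
    fun k hk => norm_mul_cos_le_re (hK k hk) (by linarith [pi_pos])
  have hre : ∀ k : ℕ, 1 ≤ k → 0 ≤ (fhat k + fhat (-k)).re := fun k hk =>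
    (mul_nonneg (norm_nonneg _) hcos.le).trans (h_sector k hk)
  have h_at_zero : Tendsto (fun N : ℕ => ∑ k ∈ Icc 1 N, (fhat k + fhat (-k)))
      atTop (𝓝 (f 0 - fhat 0)) := by
    refine ((h_series 0).sub_const (fhat 0)).congr fun N => ?_
    rw [trigPoly_zero, sum_Icc_neg_eq_add_sum, add_sub_cancel_left]
  have hB : ∀ N : ℕ, ∑ k ∈ Icc 1 N, ‖fhat k + fhat (-k)‖ ≤ (f 0 - fhat 0).re / Real.cos θ₁ :=
    fun N => (sum_norm_le_sum_re_div _ hcos fun k hk => h_sector k (mem_Icc.mp hk).1).trans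
      (by gcongr; exact sum_Icc_re_le_of_tendsto hre h_at_zero N)
  refine ⟨12 / Real.cos θ₁, by positivity, fun n hn m => ?_⟩
  calc ∑ k ∈ Icc (2 * n + 1) m, ‖fhat k + fhat (-k)‖
      ≤ (∑ k ∈ Icc (2 * n + 1) m, (fhat k + fhat (-k)).re) / Real.cos θ₁ :=
        sum_norm_le_sum_re_div _ hcos fun k hk =>
          h_sector k (by have := (mem_Icc.mp hk).1; omega)
    _ ≤ 12 * En n f / Real.cos θ₁ := by gcongr; exact sum_re_le_En h_series hcont hre hB hn m
    _ = 12 / Real.cos θ₁ * En n f := by ring
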